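/- Let σ : {0,1}^n → ℝ be defined by σ(x) = √2 · (-1)^{Q(x)} if |x| is even and σ(x) = 0 if |x| is odd, where Q(x) = Σ_{i<j} x_i x_j. Then its Fourier transform satisfies σ̂(x) = √2 · cos(π(n - 2|x|)/4) for all x. In particular, if n is odd then |σ̂(x)| = 1 for all x. -/

import Mathlib

/-! On even weights `2Q(y) + |y| = |y|²` forces `Q(y) ≡ |y|/2 (mod 2)`, so `σ(y) = √2 · Re(i^{|y|})`.
The Fourier sum of `i^{|y|}` factors over the coordinates into
`(1 - i)^{|x|} (1 + i)^{n - |x|} = √2^n · e^{iπ(n - 2|x|)/4}`, whose real part is the cosine.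
For odd `n` the angle `π(n - 2|x|)/4` is an odd multiple of `π/4`, where `|√2 cos| = 1`. -/

open Finset Real

/-- numeric value of a bit -/
def bit (b : Bool) : ℕ := if b then 1 else 0

/-- quadratic function Q(x) = Σ_{i<j} x_i x_j -/
def Q {n : ℕ} (x : Fin n → Bool) : ℕ :=
  ∑ i : Fin n, ∑ j : Fin n, if i < j then bit (x i) * bit (x j) else 0

/-- Hamming weight -/
def wt {n : ℕ} (x : Fin n → Bool) : ℕ := ∑ i : Fin n, bit (x i)

/-- inner product (before reduction mod 2) -/
def ip {n : ℕ} (x y : Fin n → Bool) : ℕ := ∑ i : Fin n, bit (x i) * bit (y i)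

/-- bitwise XOR -/
def xorv {n : ℕ} (x y : Fin n → Bool) : Fin n → Bool := fun i => xor (x i) (y i)

noncomputable def σeven {n : ℕ} (x : Fin n → Bool) : ℝ :=
  if Even (wt x) then Real.sqrt 2 * (-1 : ℝ) ^ (Q x) else 0

noncomputable def hatσeven {n : ℕ} (x : Fin n → Bool) : ℝ :=
  (Real.sqrt (2 ^ n))⁻¹ * ∑ y : Fin n → Bool, (-1 : ℝ) ^ (ip x y) * σeven y

open Complex (I)

theorem Finset.sq_sum_eq_sum_mul_self_add_two_mul_sum_lt {ι R : Type*} [Fintype ι] [LinearOrder ι]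
    [CommSemiring R] (f : ι → R) :
    (∑ i, f i) ^ 2 = ∑ i, f i * f i + 2 * ∑ i, ∑ j, if i < j then f i * f j else 0 := by
  have split (i j : ι) : f i * f j = ((if i < j then f i * f j else 0) +
      (if j < i then f j * f i else 0)) + if i = j then f i * f i else 0 := by
    rcases lt_trichotomy i j with h | rfl | h
    · simp [h, h.not_gt, h.ne]
    · simp
    · simp [h, h.not_gt, h.ne', mul_comm]
  rw [sq, sum_mul_sum]
  simp only [sum_congr rfl fun i _ => sum_congr rfl fun j _ => split i j, sum_add_distrib,
    sum_ite_eq, mem_univ, if_true]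
  rw [sum_comm (f := fun i j => if j < i then f j * f i else 0)]
  ring

lemma bit_mul_self (b : Bool) : bit b * bit b = bit b := by
  cases b <;> rfl

lemma two_mul_Q_add_wt {n : ℕ} (x : Fin n → Bool) : 2 * Q x + wt x = wt x ^ 2 := by
  rw [wt, sq_sum_eq_sum_mul_self_add_two_mul_sum_lt, Q]
  simp only [bit_mul_self]
  ring

lemma neg_one_pow_Q_of_wt_eq_two_mul {n m : ℕ} {x : Fin n → Bool} (h : wt x = 2 * m) :
    (-1 : ℝ) ^ Q x = (-1) ^ m := by
  have hQ : 2 * Q x + 2 * m = 4 * m ^ 2 := by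
    have := two_mul_Q_add_wt x
    rw [h] at this
    linarith
  rw [neg_one_pow_eq_pow_mod_two, neg_one_pow_eq_pow_mod_two (n := m)]
  congr 1
  omega

lemma Complex.I_pow_two_mul (m : ℕ) : I ^ (2 * m) = ((-1 : ℝ) ^ m : ℝ) := by
  push_cast
  rw [pow_mul, I_sq]

lemma σeven_eq_sqrt_two_mul_re_I_pow {n : ℕ} (y : Fin n → Bool) :
    σeven y = √2 * (I ^ wt y).re := by
  rcases Nat.even_or_odd' (wt y) with ⟨m, hm | hm⟩
  · rw [σeven, if_pos ⟨m, by omega⟩, neg_one_pow_Q_of_wt_eq_two_mul hm, hm,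
      Complex.I_pow_two_mul, Complex.ofReal_re]
  · rw [σeven, if_neg (by simp [hm]), hm, pow_succ, Complex.I_pow_two_mul,
      Complex.re_ofReal_mul, Complex.I_re, mul_zero, mul_zero]

lemma card_filter_eq_wt {n : ℕ} (x : Fin n → Bool) : #{i | x i = true} = wt x :=
  card_filter _ _

lemma wt_le {n : ℕ} (x : Fin n → Bool) : wt x ≤ n :=
  card_filter_eq_wt x ▸ (card_filter_le _ _).trans_eq (card_fin n)

lemma sum_neg_one_pow_ip_mul_pow_wt {R : Type*} [CommRing R] {n : ℕ} (x : Fin n → Bool) (c : R) :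
    ∑ y : Fin n → Bool, (-1 : R) ^ ip x y * c ^ wt y = (1 - c) ^ wt x * (1 + c) ^ (n - wt x) := by
  have factor (a : Bool) : ∑ b : Bool, (-1 : R) ^ (bit a * bit b) * c ^ bit b =
      if a then 1 - c else 1 + c := by
    cases a <;> simp [bit] <;> ring
  calc ∑ y : Fin n → Bool, (-1 : R) ^ ip x y * c ^ wt y
      = ∑ y : Fin n → Bool, ∏ i, (-1 : R) ^ (bit (x i) * bit (y i)) * c ^ bit (y i) := by
        simp only [prod_mul_distrib, prod_pow_eq_pow_sum, ip, wt]
    _ = ∏ i, if x i then 1 - c else 1 + c := by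
        rw [← Fintype.prod_sum (fun i b => (-1 : R) ^ (bit (x i) * bit b) * c ^ bit b)]
        simp only [factor]
    _ = (1 - c) ^ wt x * (1 + c) ^ (n - wt x) := by
        rw [prod_ite, prod_const, prod_const, card_filter_eq_wt, filter_not, card_univ_sdiff,
          card_filter_eq_wt, Fintype.card_fin]

lemma sqrt_two_mul_sqrt_two_div_two : √2 * (√2 / 2) = 1 := by
  rw [mul_div_assoc', mul_self_sqrt zero_le_two, div_self two_ne_zero]

lemma Complex.one_add_I_eq : 1 + I = √2 * exp ((π / 4 : ℝ) * I) := by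
  rw [exp_mul_I, ← ofReal_cos, ← ofReal_sin, cos_pi_div_four, sin_pi_div_four, mul_add,
    ← mul_assoc, ← ofReal_mul, sqrt_two_mul_sqrt_two_div_two, ofReal_one, one_mul]

lemma Complex.one_sub_I_eq : 1 - I = √2 * exp ((-(π / 4) : ℝ) * I) := by
  rw [exp_mul_I, ← ofReal_cos, ← ofReal_sin, Real.cos_neg, Real.sin_neg, cos_pi_div_four,
    sin_pi_div_four, mul_add, ← mul_assoc, ← ofReal_mul, ofReal_neg, mul_neg, ← ofReal_mul,
    sqrt_two_mul_sqrt_two_div_two, ofReal_one, neg_one_mul, sub_eq_add_neg]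

lemma Complex.one_sub_I_pow_mul_one_add_I_pow {w n : ℕ} (h : w ≤ n) :
    (1 - I) ^ w * (1 + I) ^ (n - w) = (√2 ^ n : ℝ) * exp ((π * (n - 2 * w) / 4 : ℝ) * I) := by
  rw [one_sub_I_eq, one_add_I_eq, mul_pow, mul_pow, mul_mul_mul_comm, ← pow_add,
    Nat.add_sub_cancel' h, ← exp_nat_mul, ← exp_nat_mul, ← exp_add]
  push_cast [Nat.cast_sub h]
  ring_nf

lemma sum_neg_one_pow_ip_mul_σeven {n : ℕ} (x : Fin n → Bool) :
    ∑ y : Fin n → Bool, (-1 : ℝ) ^ ip x y * σeven y =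
      √2 * √2 ^ n * cos (π * (n - 2 * wt x) / 4) := by
  have hre (k : ℕ) (z : ℂ) : ((-1 : ℂ) ^ k * z).re = (-1 : ℝ) ^ k * z.re := by
    exact_mod_cast Complex.re_ofReal_mul ((-1) ^ k) z
  calc ∑ y : Fin n → Bool, (-1 : ℝ) ^ ip x y * σeven y
      = √2 * (∑ y : Fin n → Bool, (-1 : ℂ) ^ ip x y * I ^ wt y).re := by
        simp only [σeven_eq_sqrt_two_mul_re_I_pow, Complex.re_sum, hre, mul_sum]
        ring_nf
    _ = √2 * √2 ^ n * cos (π * (n - 2 * wt x) / 4) := by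
        rw [sum_neg_one_pow_ip_mul_pow_wt, Complex.one_sub_I_pow_mul_one_add_I_pow (wt_le x),
          Complex.re_ofReal_mul, Complex.exp_ofReal_mul_I_re, mul_assoc]

lemma sqrt_two_pow (n : ℕ) : √(2 ^ n) = √2 ^ n := by
  rw [← sqrt_sq (pow_nonneg (sqrt_nonneg 2) n), ← pow_mul, mul_comm, pow_mul, sq_sqrt zero_le_two]

lemma abs_sqrt_two_mul_cos_of_cos_two_mul_eq_zero {θ : ℝ} (h : cos (2 * θ) = 0) :
    |√2 * cos θ| = 1 := by
  rw [← sqrt_sq_eq_abs, mul_pow, cos_sq, h, sq_sqrt zero_le_two]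
  norm_num

lemma cos_two_mul_pi_mul_sub_two_mul_div_four {n w : ℕ} (hn : Odd n) :
    cos (2 * (π * (n - 2 * w) / 4)) = 0 := by
  obtain ⟨k, rfl⟩ := hn
  rw [cos_eq_zero_iff]
  exact ⟨k - w, by push_cast; ring⟩

theorem hatσeven_eq {n : ℕ} :
    (∀ x : Fin n → Bool,
      hatσeven x = Real.sqrt 2 * Real.cos (Real.pi * ((n : ℝ) - 2 * (wt x : ℝ)) / 4)) ∧
    (Odd n → ∀ x : Fin n → Bool, |hatσeven x| = 1) := by
  have formula (x : Fin n → Bool) : hatσeven x = √2 * cos (π * (n - 2 * wt x) / 4) := by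
    have : √2 ^ n ≠ 0 := pow_ne_zero n (sqrt_ne_zero'.2 two_pos)
    rw [hatσeven, sum_neg_one_pow_ip_mul_σeven, sqrt_two_pow]
    field_simp
  refine ⟨formula, fun hn x => ?_⟩
  rw [formula]
  exact abs_sqrt_two_mul_cos_of_cos_two_mul_eq_zero (cos_two_mul_pi_mul_sub_two_mul_div_four hn)
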